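/- If I is a proper summable ideal on ω, i.e., I = {A ⊆ ω : Σ_{n∈A} f(n) < ∞} for some function f : ω → [0,∞) with Σ_{n∈ω} f(n) = ∞, then the space N_{I*} associated to the dual filter I* has the bounded Josefson–Nissenzweig property. -/

import Mathlib

open Filter Topology

noncomputable section

/-- The topology of the space `N_F = ω ∪ {p_F}` on `Option α`, where `none` plays the
role of the point `p_F`: every `some a` is isolated, and neighborhoods of `none`
are the sets `A ∪ {p_F}` with `A ∈ F`. -/
def NFtop {α : Type*} (F : Filter α) : TopologicalSpace (Option α) where
  IsOpen U := none ∈ U → {a : α | some a ∈ U} ∈ F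
  isOpen_univ := fun _ => Filter.univ_mem
  isOpen_inter := fun U V hU hV h => F.inter_sets (hU h.1) (hV h.2)
  isOpen_sUnion := fun S hS h => by
    obtain ⟨U, hU, hnU⟩ := h
    exact Filter.mem_of_superset (hS U hU hnU) fun a ha => ⟨U, hU, ha⟩

/-- The norm `‖μ‖ = Σ |α_i|` of a finitely supported signed measure. -/
def mnorm {X : Type*} (μ : X →₀ ℝ) : ℝ := ∑ x ∈ μ.support, |μ x|

/-- The integral `μ(f) = Σ α_i f(x_i)`. -/
def mIntg {X : Type*} (μ : X →₀ ℝ) (f : X → ℝ) : ℝ := ∑ x ∈ μ.support, μ x * f x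

/-- The norm of the restriction `μ ↾ A`. -/
def mnormOn {X : Type*} (μ : X →₀ ℝ) (A : Set X) : ℝ :=
  ∑ x ∈ μ.support, Set.indicator A (fun y => |μ y|) x

/-- The value `μ(A)` of a finitely supported signed measure on a set. -/
def msetOf {X : Type*} (μ : X →₀ ℝ) (A : Set X) : ℝ :=
  ∑ x ∈ μ.support, Set.indicator A (fun y => μ y) x

/-- A JN-sequence on `X` (with topology `t`). -/
def IsJNSeq {X : Type*} (t : TopologicalSpace X) (μ : ℕ → (X →₀ ℝ)) : Prop :=
  (∀ n, mnorm (μ n) = 1) ∧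
  ∀ f : X → ℝ, @Continuous X ℝ t _ f →
    Tendsto (fun n => mIntg (μ n) f) atTop (nhds 0)

/-- A BJN-sequence on `X` (with topology `t`). -/
def IsBJNSeq {X : Type*} (t : TopologicalSpace X) (μ : ℕ → (X →₀ ℝ)) : Prop :=
  (∀ n, mnorm (μ n) = 1) ∧
  ∀ f : X → ℝ, @Continuous X ℝ t _ f → (∃ C : ℝ, ∀ x, |f x| ≤ C) →
    Tendsto (fun n => mIntg (μ n) f) atTop (nhds 0)

/-- The Josefson–Nissenzweig property. -/
def JNP {X : Type*} (t : TopologicalSpace X) : Prop := ∃ μ, IsJNSeq t μ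

/-- The bounded Josefson–Nissenzweig property. -/
def BJNP {X : Type*} (t : TopologicalSpace X) : Prop := ∃ μ, IsBJNSeq t μ

/-- A free filter: a proper filter containing all cofinite sets. -/
def IsFreeFilter {α : Type*} (F : Filter α) : Prop := F.NeBot ∧ F ≤ Filter.cofinite

/-- Katětov preorder: `F ≤_K G`. -/
def KatetovLE (F G : Filter ℕ) : Prop := ∃ f : ℕ → ℕ, ∀ A ∈ F, f ⁻¹' A ∈ G


theorem mnorm_eq_sum {X : Type*} (μ : X →₀ ℝ) (T : Finset X) (hT : μ.support ⊆ T) :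
    mnorm μ = ∑ x ∈ T, |μ x| :=
  Finset.sum_subset hT (fun x _ hx => by simp [Finsupp.notMem_support_iff.mp hx])

theorem mIntg_eq_sum {X : Type*} (μ : X →₀ ℝ) (T : Finset X) (hT : μ.support ⊆ T)
    (φ : X → ℝ) : mIntg μ φ = ∑ x ∈ T, μ x * φ x :=
  Finset.sum_subset hT (fun x _ hx => by simp [Finsupp.notMem_support_iff.mp hx])

/-- If `I = {A : Σ_{n∈A} f(n) < ∞}` is a proper summable ideal (`f ≥ 0`,
`Σ_n f(n) = ∞`), then the space `N_{I*}` associated to its dual filter has the BJNP. -/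
theorem stmt7 (f : ℕ → ℝ) (hf0 : ∀ n, 0 ≤ f n) (hdiv : ¬ Summable f)
    (F : Filter ℕ) (hdual : ∀ A : Set ℕ, A ∈ F ↔ Summable (Aᶜ.indicator f)) :
    BJNP (NFtop F) := by
  classical
  have hstop : Tendsto (fun n => ∑ i ∈ Finset.range n, f i) atTop atTop :=
    (not_summable_iff_tendsto_nat_atTop_of_nonneg hf0).1 hdiv
  have hex : ∀ n : ℕ, ∃ m, n < m ∧
      1 ≤ (∑ i ∈ Finset.range m, f i) - ∑ i ∈ Finset.range n, f i := by
    intro n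
    obtain ⟨m, hm1, hm2⟩ :=
      ((hstop.eventually_ge_atTop ((∑ i ∈ Finset.range n, f i) + 1)).and
        (eventually_gt_atTop n)).exists
    exact ⟨m, hm2, by linarith⟩
  let N : ℕ → ℕ := fun k => Nat.rec 0 (fun _ p => (hex p).choose) k
  have hNlt : ∀ k, N k < N (k + 1) := fun k => (hex (N k)).choose_spec.1
  have hNsum : ∀ k, 1 ≤ (∑ i ∈ Finset.range (N (k+1)), f i) - ∑ i ∈ Finset.range (N k), f i :=
    fun k => (hex (N k)).choose_spec.2
  have hNmono : StrictMono N := strictMono_nat_of_lt_succ hNlt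
  set E : ℕ → Finset ℕ := fun k => Finset.Ico (N k) (N (k + 1)) with hE_def
  set S : ℕ → ℝ := fun k => ∑ i ∈ E k, f i with hS_def
  have hES : ∀ k, S k = (∑ i ∈ Finset.range (N (k+1)), f i) - ∑ i ∈ Finset.range (N k), f i :=
    fun k => Finset.sum_Ico_eq_sub f (hNlt k).le
  have hS1 : ∀ k, 1 ≤ S k := fun k => (hES k) ▸ hNsum k
  have hSpos : ∀ k, 0 < S k := fun k => lt_of_lt_of_le one_pos (hS1 k)
  let g : ℕ → Option ℕ → ℝ := fun k x =>
    Option.rec (1 / 2) (fun i => if i ∈ E k then -(f i / (2 * S k)) else 0) x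
  have hgsupp : ∀ k, ∀ x : Option ℕ, g k x ≠ 0 → x ∈ insert none ((E k).image some) := by
    intro k x hx
    match x with
    | none => exact Finset.mem_insert_self _ _
    | some i =>
      refine Finset.mem_insert_of_mem (Finset.mem_image_of_mem some ?_)
      by_contra hi
      exact hx ((if_neg hi : (if i ∈ E k then -(f i / (2 * S k)) else 0) = 0))
  let μ : ℕ → (Option ℕ →₀ ℝ) := fun k => Finsupp.onFinset _ (g k) (hgsupp k)
  have hμn : ∀ k, μ k none = 1 / 2 := fun k => rfl
  have hμs : ∀ k i, i ∈ E k → μ k (some i) = -(f i / (2 * S k)) := by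
    intro k i hi
    exact if_pos hi
  have hT : ∀ k, (μ k).support ⊆ insert none ((E k).image some) :=
    fun k => Finsupp.support_onFinset_subset
  have hnone_not : ∀ k, (none : Option ℕ) ∉ (E k).image some := by
    intro k h; simp at h
  have hnorm : ∀ k, mnorm (μ k) = 1 := by
    intro k
    have hSne : S k ≠ 0 := ne_of_gt (hSpos k)
    rw [mnorm_eq_sum (μ k) _ (hT k), Finset.sum_insert (hnone_not k),
      Finset.sum_image (fun a _ b _ h => Option.some_injective _ h)]
    have h1 : ∀ i ∈ E k, |μ k (some i)| = f i / (2 * S k) := by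
      intro i hi
      rw [hμs k i hi, abs_neg, abs_of_nonneg]
      exact div_nonneg (hf0 i) (by linarith [hSpos k])
    rw [Finset.sum_congr rfl h1, ← Finset.sum_div]
    have hSS : ∑ i ∈ E k, f i = S k := rfl
    rw [hSS]
    have h2 : S k / (2 * S k) = 1 / 2 := by
      rw [div_eq_iff (by positivity : (2 : ℝ) * S k ≠ 0)]
      ring
    rw [hμn k, h2, abs_of_nonneg (by norm_num : (0:ℝ) ≤ 1 / 2)]
    norm_num
  have hIntg : ∀ k (φ : Option ℕ → ℝ),
      mIntg (μ k) φ = (2 * S k)⁻¹ * ∑ i ∈ E k, f i * (φ none - φ (some i)) := by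
    intro k φ
    have hSne : S k ≠ 0 := ne_of_gt (hSpos k)
    rw [mIntg_eq_sum (μ k) _ (hT k) φ, Finset.sum_insert (hnone_not k),
      Finset.sum_image (fun a _ b _ h => Option.some_injective _ h)]
    have key : ∑ i ∈ E k, f i * (φ none - φ (some i))
        = S k * φ none - ∑ i ∈ E k, f i * φ (some i) := by
      simp only [mul_sub]
      rw [Finset.sum_sub_distrib, ← Finset.sum_mul]
    have h1 : ∑ i ∈ E k, μ k (some i) * φ (some i)
        = -((2 * S k)⁻¹ * ∑ i ∈ E k, f i * φ (some i)) := by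
      have h1' : ∀ i ∈ E k, μ k (some i) * φ (some i)
          = -((2 * S k)⁻¹ * (f i * φ (some i))) := by
        intro i hi
        rw [hμs k i hi]
        ring
      rw [Finset.sum_congr rfl h1', Finset.sum_neg_distrib, ← Finset.mul_sum]
    rw [hμn k, h1, key]
    have h2 : (1 : ℝ) / 2 = (2 * S k)⁻¹ * S k := by
      rw [eq_comm, inv_mul_eq_div, div_eq_div_iff (by positivity) (by norm_num)]
      ring
    rw [mul_sub, ← mul_assoc, ← h2]
    ring
  refine ⟨μ, hnorm, ?_⟩
  intro φ hcont hbdd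
  letI : TopologicalSpace (Option ℕ) := NFtop F
  obtain ⟨C, hC⟩ := hbdd
  have hC0 : 0 ≤ C := le_trans (abs_nonneg _) (hC none)
  rw [NormedAddCommGroup.tendsto_nhds_zero]
  intro ε hε
  have hUopen : IsOpen (φ ⁻¹' Metric.ball (φ none) ε) :=
    hcont.isOpen_preimage _ Metric.isOpen_ball
  set A : Set ℕ := {a : ℕ | some a ∈ φ ⁻¹' Metric.ball (φ none) ε} with hA_def
  have hAF : A ∈ F := by
    have hmem : (none : Option ℕ) ∈ φ ⁻¹' Metric.ball (φ none) ε := by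
      simp only [Set.mem_preimage, Metric.mem_ball, dist_self]
      exact hε
    exact hUopen hmem
  have hsumm : Summable (Aᶜ.indicator f) := (hdual A).1 hAF
  set h' : ℕ → ℝ := Aᶜ.indicator f with hh'_def
  have hh'0 : ∀ i, 0 ≤ h' i := fun i => Set.indicator_nonneg (fun j _ => hf0 j) i
  have hterm : Tendsto (fun k => ∑ i ∈ E k, h' i) atTop (nhds 0) := by
    have hp : Tendsto (fun n => ∑ i ∈ Finset.range n, h' i) atTop (nhds (∑' i, h' i)) :=
      hsumm.hasSum.tendsto_sum_nat
    have hNt : Tendsto N atTop atTop := hNmono.tendsto_atTop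
    have hN1t : Tendsto (fun k => N (k + 1)) atTop atTop :=
      hNt.comp (tendsto_add_atTop_nat 1)
    have hsub := (hp.comp hN1t).sub (hp.comp hNt)
    rw [sub_self] at hsub
    refine hsub.congr fun k => ?_
    simp only [Function.comp]
    exact (Finset.sum_Ico_eq_sub h' (hNlt k).le).symm
  have h2 : Tendsto (fun k => C * ∑ i ∈ E k, h' i) atTop (nhds 0) := by
    simpa using hterm.const_mul C
  have hev : ∀ᶠ k in atTop, C * ∑ i ∈ E k, h' i < ε / 2 :=
    h2.eventually_lt_const (half_pos hε)
  filter_upwards [hev] with k hk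
  have hSne : S k ≠ 0 := ne_of_gt (hSpos k)
  have ht0 : 0 ≤ ∑ i ∈ E k, h' i := Finset.sum_nonneg fun i _ => hh'0 i
  rw [Real.norm_eq_abs, hIntg k φ]
  have hinv : 0 ≤ (2 * S k)⁻¹ := inv_nonneg.2 (by linarith [hSpos k])
  have hb1 : |(2 * S k)⁻¹ * ∑ i ∈ E k, f i * (φ none - φ (some i))|
      ≤ (2 * S k)⁻¹ * ∑ i ∈ E k, (f i * ε + 2 * C * h' i) := by
    rw [abs_mul, abs_of_nonneg hinv]
    refine mul_le_mul_of_nonneg_left ?_ hinv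
    refine le_trans (Finset.abs_sum_le_sum_abs _ _) (Finset.sum_le_sum ?_)
    intro i hi
    rw [abs_mul, abs_of_nonneg (hf0 i)]
    by_cases hiA : i ∈ A
    · have hdist : |φ none - φ (some i)| ≤ ε := by
        have hmem : dist (φ (some i)) (φ none) < ε := hiA
        rw [Real.dist_eq] at hmem
        rw [abs_sub_comm]
        linarith
      have h3 := mul_le_mul_of_nonneg_left hdist (hf0 i)
      have h4 : 0 ≤ 2 * C * h' i := mul_nonneg (by linarith) (hh'0 i)
      linarith
    · have hdist : |φ none - φ (some i)| ≤ 2 * C := by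
        calc |φ none - φ (some i)| ≤ |φ none| + |φ (some i)| := abs_sub _ _
          _ ≤ C + C := add_le_add (hC none) (hC (some i))
          _ = 2 * C := by ring
      have hh'eq : h' i = f i := Set.indicator_of_mem (Set.mem_compl hiA) f
      have h3 := mul_le_mul_of_nonneg_left hdist (hf0 i)
      have h4 : 0 ≤ f i * ε := mul_nonneg (hf0 i) hε.le
      have h5 : f i * (2 * C) = 2 * C * f i := by ring
      rw [hh'eq]
      linarith
  have hsum2 : ∑ i ∈ E k, (f i * ε + 2 * C * h' i)
      = S k * ε + 2 * C * ∑ i ∈ E k, h' i := by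
    rw [Finset.sum_add_distrib, ← Finset.sum_mul, ← Finset.mul_sum]
  have heq : (2 * S k)⁻¹ * (S k * ε + 2 * C * ∑ i ∈ E k, h' i)
      = ε / 2 + C * (∑ i ∈ E k, h' i) / S k := by
    field_simp
  have hdivle : C * (∑ i ∈ E k, h' i) / S k ≤ C * ∑ i ∈ E k, h' i :=
    div_le_self (mul_nonneg hC0 ht0) (hS1 k)
  calc |(2 * S k)⁻¹ * ∑ i ∈ E k, f i * (φ none - φ (some i))|
      ≤ (2 * S k)⁻¹ * ∑ i ∈ E k, (f i * ε + 2 * C * h' i) := hb1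
    _ = ε / 2 + C * (∑ i ∈ E k, h' i) / S k := by rw [hsum2, heq]
    _ ≤ ε / 2 + C * ∑ i ∈ E k, h' i := by linarith
    _ < ε := by linarith
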